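/- The left-symmetric algebras A_{2,α} and A_{2,α̃} on ℂ⁴ are isomorphic (as nonassociative algebras) if and only if α² = α̃². -/
import Mathlib


/-- Left-multiplication matrices of the family `A_{2,α}` on `ℂ⁴` with basis
`(x, y, h, z)` (columns indexed by the basis). -/
noncomputable def L2 (α : ℂ) : Fin 4 → Matrix (Fin 4) (Fin 4) ℂ :=
  ![!![0, 0, -1, 1 + α; 0, 0, 0, 0; 0, (1 + α)/2, 0, 0; 0, 1/2, 0, 0],
    !![0, 0, 0, 0; 0, 0, 1, 1 - α; (α - 1)/2, 0, 0, 0; 1/2, 0, 0, 0],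
    !![1, 0, 0, 0; 0, -1, 0, 0; 0, 0, α, 1 - α^2; 0, 0, 1, -α],
    !![1 + α, 0, 0, 0; 0, 1 - α, 0, 0; 0, 0, 1 - α^2, α^3 - α; 0, 0, -α, 1 + α^2]]

/-- The bilinear product of `A_{2,α}` on `ℂ⁴` determined by `L2 α`. -/
noncomputable def mul2 (α : ℂ) (a b : Fin 4 → ℂ) : Fin 4 → ℂ :=
  ∑ i : Fin 4, a i • (L2 α i).mulVec b


noncomputable def M2 (α : ℂ) (a : Fin 4 → ℂ) : Matrix (Fin 4) (Fin 4) ℂ :=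
  ∑ i : Fin 4, a i • L2 α i

lemma mul2_eq (α : ℂ) (a b : Fin 4 → ℂ) : mul2 α a b = (M2 α a).mulVec b := by
  funext k
  fin_cases k <;>
    simp [mul2, M2, L2, Matrix.mulVec, dotProduct, Matrix.vecHead, Matrix.vecTail,
      Fin.sum_univ_four, Matrix.sum_apply] <;> ring

lemma trace_M2 (α : ℂ) (a : Fin 4 → ℂ) : (M2 α a).trace = 4 * a 3 := by
  simp only [M2, Fin.sum_univ_four, Matrix.trace_add, Matrix.trace_smul, L2]
  simp [Matrix.trace, Fin.sum_univ_four, Matrix.diag, Matrix.vecHead, Matrix.vecTail]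
  ring

lemma trace_M2_mul (α : ℂ) (a b : Fin 4 → ℂ) :
    (M2 α a * M2 α b).trace =
      2 * (a 0 * b 1 + a 1 * b 0) + 4 * (a 2 * b 2) + (4 + 4 * α ^ 2) * (a 3 * b 3) := by
  simp [M2, L2, Matrix.trace, Matrix.mul_apply, Fin.sum_univ_four, Matrix.sum_apply,
    Matrix.vecHead, Matrix.vecTail, Matrix.diag]
  ring



noncomputable def sw : (Fin 4 → ℂ) ≃ₗ[ℂ] (Fin 4 → ℂ) where
  toFun a := ![a 1, a 0, -a 2, a 3]
  invFun a := ![a 1, a 0, -a 2, a 3]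
  map_add' a b := by funext k; fin_cases k <;> simp <;> ring
  map_smul' c a := by funext k; fin_cases k <;> simp
  left_inv a := by funext k; fin_cases k <;> simp
  right_inv a := by funext k; fin_cases k <;> simp

lemma sw_apply (v : Fin 4 → ℂ) : sw v = ![v 1, v 0, -v 2, v 3] := rfl

lemma sw_iso (α : ℂ) (a b : Fin 4 → ℂ) : sw (mul2 α a b) = mul2 (-α) (sw a) (sw b) := by
  funext k
  fin_cases k <;>
    simp [sw_apply, mul2, L2, Matrix.mulVec, dotProduct, Fin.sum_univ_four,
      Matrix.vecHead, Matrix.vecTail] <;> ring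

/-- `A_{2,α}` and `A_{2,α̃}` are isomorphic iff `α² = α̃²`. -/
theorem A2_iso_iff (α α' : ℂ) :
    (∃ φ : (Fin 4 → ℂ) ≃ₗ[ℂ] (Fin 4 → ℂ),
      ∀ a b : Fin 4 → ℂ, φ (mul2 α a b) = mul2 α' (φ a) (φ b)) ↔ α ^ 2 = α' ^ 2 := by
  constructor
  · intro h
    obtain ⟨φ, H⟩ := h
    set P := LinearMap.toMatrix' (φ : (Fin 4 → ℂ) →ₗ[ℂ] (Fin 4 → ℂ)) with hP
    set Q := LinearMap.toMatrix' (φ.symm : (Fin 4 → ℂ) →ₗ[ℂ] (Fin 4 → ℂ)) with hQ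
    have hφ : ∀ v, φ v = P.mulVec v := by
      intro v
      rw [hP, ← Matrix.toLin'_apply, Matrix.toLin'_toMatrix']
      rfl
    have hPQ : P * Q = 1 := by
      have hc : (φ : (Fin 4 → ℂ) →ₗ[ℂ] (Fin 4 → ℂ)) ∘ₗ (φ.symm : (Fin 4 → ℂ) →ₗ[ℂ] (Fin 4 → ℂ))
          = LinearMap.id := by ext v; simp
      rw [hP, hQ, ← LinearMap.toMatrix'_comp, hc, LinearMap.toMatrix'_id]
    have hQP : Q * P = 1 := by
      have hc : (φ.symm : (Fin 4 → ℂ) →ₗ[ℂ] (Fin 4 → ℂ)) ∘ₗ (φ : (Fin 4 → ℂ) →ₗ[ℂ] (Fin 4 → ℂ))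
          = LinearMap.id := by ext v; simp
      rw [hQ, hP, ← LinearMap.toMatrix'_comp, hc, LinearMap.toMatrix'_id]
    have h1 : ∀ a, M2 α' (φ a) * P = P * M2 α a := by
      intro a
      apply Matrix.ext
      intro i j
      have h := H a (Pi.single j 1)
      simp only [mul2_eq, hφ, Matrix.mulVec_mulVec] at h
      have h' := congrFun h i
      rw [hφ]
      simpa [Matrix.mulVec_single] using h'.symm
    have hM : ∀ a, M2 α' (φ a) = P * M2 α a * Q := by
      intro a
      rw [← h1 a, Matrix.mul_assoc, hPQ, Matrix.mul_one]
    have htr : ∀ a, (φ a) 3 = a 3 := by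
      intro a
      have h2 : (M2 α' (φ a)).trace = (M2 α a).trace := by
        rw [hM a, Matrix.trace_mul_cycle, hQP, Matrix.one_mul]
      rw [trace_M2, trace_M2] at h2
      linear_combination h2 / 4
    have hB : ∀ a b, (M2 α' (φ a) * M2 α' (φ b)).trace = (M2 α a * M2 α b).trace := by
      intro a b
      rw [hM a, hM b]
      have e1 : P * M2 α a * Q * (P * M2 α b * Q) = P * (M2 α a * M2 α b) * Q := by
        simp only [Matrix.mul_assoc]
        rw [show Q * (P * (M2 α b * Q)) = Q * P * (M2 α b * Q) from (Matrix.mul_assoc _ _ _).symm,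
          hQP, Matrix.one_mul]
      rw [e1, Matrix.trace_mul_cycle, hQP, Matrix.one_mul]
    -- extraction
    set e3 : Fin 4 → ℂ := Pi.single 3 1 with he3
    have hu3 : (φ e3) 3 = 1 := by rw [htr e3, he3]; simp
    have hw3 : ∀ j : Fin 4, j ≠ 3 → (φ.symm (Pi.single j 1)) 3 = 0 := by
      intro j hj
      have h2 := htr (φ.symm (Pi.single j 1))
      rw [LinearEquiv.apply_symm_apply] at h2
      rw [← h2]
      simp [Pi.single_apply, Ne.symm hj]
    have key : ∀ j : Fin 4, j ≠ 3 →
        (M2 α' (φ e3) * M2 α' (Pi.single j 1)).trace = 0 := by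
      intro j hj
      have h3 := hB e3 (φ.symm (Pi.single j 1))
      rw [LinearEquiv.apply_symm_apply] at h3
      rw [h3, trace_M2_mul, hw3 j hj, he3]
      simp [Pi.single_apply]
    have k0 := key 0 (by decide)
    have k1 := key 1 (by decide)
    have k2 := key 2 (by decide)
    rw [trace_M2_mul] at k0 k1 k2
    simp (config := { decide := true }) [Pi.single_apply] at k0 k1 k2
    have hfin := hB e3 e3
    rw [trace_M2_mul, trace_M2_mul] at hfin
    rw [he3] at hfin hu3
    simp (config := { decide := true }) [Pi.single_apply] at hfin
    rw [hu3] at hfin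
    rw [k0, k1, k2] at hfin
    linear_combination -hfin / 4
  · intro h
    have hz : (α' - α) * (α' + α) = 0 := by linear_combination -h
    rcases mul_eq_zero.1 hz with h1 | h1
    · have he : α' = α := by linear_combination h1
      subst he
      exact ⟨LinearEquiv.refl ℂ _, fun a b => rfl⟩
    · have he : α' = -α := by linear_combination h1
      subst he
      exact ⟨sw, fun a b => sw_iso α a b⟩
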